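/- Let U and W be finite nonempty types, and let P, Q be probability mass functions on U × W such that for every u ∈ U with P_U(u) > 0 and Q_U(u) > 0, the conditional distribution of W given u is the same under P and Q. Let M = ½(P + Q). Then for every u ∈ U with M_U(u) > 0, the conditional distribution of W given u under M equals the conditional distribution of W given u under P whenever P_U(u) > 0 (and equals that under Q whenever Q_U(u) > 0), and consequently D_KL(P ‖ M) = D_KL(P_U ‖ M_U), where P_U and M_U denote the marginals on U of P and M. -/

import Mathlib

open scoped BigOperators ENNReal

noncomputable section

/-- Kullback–Leibler divergence between two PMFs on a finite type (real-valued;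
with the convention that the summand is `0` when `μ x = 0`). -/
def klDiv {α : Type*} [Fintype α] (μ ν : PMF α) : ℝ :=
  ∑ x, if μ x = 0 then 0 else (μ x).toReal * Real.log ((μ x).toReal / (ν x).toReal)

/-- The mixture `½ (μ + ν)` of two PMFs on a finite type. -/
def mix {α : Type*} [Fintype α] (μ ν : PMF α) : PMF α :=
  ⟨fun x => (μ x + ν x) / 2, by
    have h1 : (∑ x, μ x) = 1 := by simpa [tsum_fintype] using μ.tsum_coe
    have h2 : (∑ x, ν x) = 1 := by simpa [tsum_fintype] using ν.tsum_coe
    have key : (∑ x, (μ x + ν x) / 2) = 1 := by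
      simp only [div_eq_mul_inv, ← Finset.sum_mul]
      rw [Finset.sum_add_distrib, h1, h2, one_add_one_eq_two]
      exact ENNReal.mul_inv_cancel two_ne_zero (by simp)
    simpa [key] using hasSum_fintype (fun x => (μ x + ν x) / 2)⟩

/-- Jensen–Shannon divergence: `½ D_KL(μ ‖ M) + ½ D_KL(ν ‖ M)` with `M = ½(μ + ν)`. -/
def jsDiv {α : Type*} [Fintype α] (μ ν : PMF α) : ℝ :=
  klDiv μ (mix μ ν) / 2 + klDiv ν (mix μ ν) / 2

/-- Product of two PMFs. -/
def prodPMF {α β : Type*} (μ : PMF α) (ν : PMF β) : PMF (α × β) :=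
  μ.bind fun a => ν.map (Prod.mk a)

/-- Mutual information of a joint PMF: `D_KL(μ ‖ μ₁ ⊗ μ₂)`. -/
def mutualInfo {α β : Type*} [Fintype α] [Fintype β] (μ : PMF (α × β)) : ℝ :=
  klDiv μ (prodPMF (μ.map Prod.fst) (μ.map Prod.snd))

/-- Shannon entropy of an `ℝ≥0∞`-valued mass function. -/
def entropy {α : Type*} [Fintype α] (f : α → ℝ≥0∞) : ℝ :=
  -∑ x, (f x).toReal * Real.log (f x).toReal

/-- Conditional distribution of the second coordinate given the first:
`μ(a, ·) / μ_1(a)`. -/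
def condDist {α β : Type*} (μ : PMF (α × β)) (a : α) : β → ℝ≥0∞ :=
  fun b => μ (a, b) / (μ.map Prod.fst) a

/-- Model-output joint: the law of `(X, Y_θ)` where `X ∼ μX` and `Y_θ ∼ θ(X)`. -/
def modelJoint {α β : Type*} (μX : PMF α) (θ : α → PMF β) : PMF (α × β) :=
  μX.bind fun x => (θ x).map (Prod.mk x)

/-- Marginal of a PMF on `U × A × D` on the first coordinate. -/
def margU {U A D : Type*} (μ : PMF (U × A × D)) : PMF U := μ.map fun p => p.1

/-- Marginal of a PMF on `U × A × D` on the second coordinate. -/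
def margA {U A D : Type*} (μ : PMF (U × A × D)) : PMF A := μ.map fun p => p.2.1

/-- Marginal of a PMF on `U × A × D` on the third coordinate. -/
def margD {U A D : Type*} (μ : PMF (U × A × D)) : PMF D := μ.map fun p => p.2.2


section helpers
variable {U W : Type*} [Fintype U] [Fintype W]

lemma map_fst_apply (P : PMF (U × W)) (u : U) :
    (P.map Prod.fst) u = ∑ w, P (u, w) := by
  classical
  rw [PMF.map_apply, tsum_fintype, Fintype.sum_prod_type, Finset.sum_comm]
  refine Finset.sum_congr rfl fun w _ => ?_
  rw [Finset.sum_ite_eq]; simp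

lemma mix_apply' (P Q : PMF (U × W)) (x : U × W) : (mix P Q) x = (P x + Q x) / 2 := rfl

lemma mix_map_fst (P Q : PMF (U × W)) (u : U) :
    ((mix P Q).map Prod.fst) u = ((P.map Prod.fst) u + (Q.map Prod.fst) u) / 2 := by
  rw [map_fst_apply, map_fst_apply, map_fst_apply]
  simp only [mix_apply', div_eq_mul_inv, ← Finset.sum_mul, Finset.sum_add_distrib]

lemma mix_cross (P Q : PMF (U × W))
    (hcond : ∀ u : U, (P.map Prod.fst) u ≠ 0 → (Q.map Prod.fst) u ≠ 0 →
      condDist P u = condDist Q u)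
    (u : U) (hp : (P.map Prod.fst) u ≠ 0) (w : W) :
    (mix P Q) (u, w) * (P.map Prod.fst) u = P (u, w) * ((mix P Q).map Prod.fst) u := by
  classical
  have hpt : (P.map Prod.fst) u ≠ ⊤ := PMF.apply_ne_top _ _
  have hqt : (Q.map Prod.fst) u ≠ ⊤ := PMF.apply_ne_top _ _
  have key : Q (u, w) * (P.map Prod.fst) u = P (u, w) * (Q.map Prod.fst) u := by
    by_cases hq : (Q.map Prod.fst) u = 0
    · have hsum : (∑ w', Q (u, w')) = 0 := by rw [← map_fst_apply]; exact hq
      have hQ0 : Q (u, w) = 0 :=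
        (Finset.sum_eq_zero_iff.mp hsum) w (Finset.mem_univ w)
      rw [hQ0, hq, zero_mul, mul_zero]
    · have hcw := congrFun (hcond u hp hq) w
      simp only [condDist] at hcw
      calc Q (u, w) * (P.map Prod.fst) u
          = (Q (u, w) / (Q.map Prod.fst) u) * (Q.map Prod.fst) u * (P.map Prod.fst) u := by
            rw [ENNReal.div_mul_cancel hq hqt]
        _ = (P (u, w) / (P.map Prod.fst) u) * (P.map Prod.fst) u * (Q.map Prod.fst) u := by
            rw [← hcw]; ring
        _ = P (u, w) * (Q.map Prod.fst) u := by rw [ENNReal.div_mul_cancel hp hpt]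
  rw [mix_apply', mix_map_fst]
  calc (P (u,w) + Q (u,w)) / 2 * (P.map Prod.fst) u
      = (P (u,w) * (P.map Prod.fst) u + Q (u,w) * (P.map Prod.fst) u) / 2 := by
        rw [div_eq_mul_inv, div_eq_mul_inv]; ring
    _ = (P (u,w) * (P.map Prod.fst) u + P (u,w) * (Q.map Prod.fst) u) / 2 := by rw [key]
    _ = P (u,w) * (((P.map Prod.fst) u + (Q.map Prod.fst) u) / 2) := by
        rw [div_eq_mul_inv, div_eq_mul_inv]; ring

lemma mix_margin_ne_zero (P Q : PMF (U × W)) (u : U) (hp : (P.map Prod.fst) u ≠ 0) :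
    ((mix P Q).map Prod.fst) u ≠ 0 := by
  rw [mix_map_fst]
  simp only [ne_eq, ENNReal.div_eq_zero_iff, add_eq_zero, ENNReal.ofNat_ne_top, or_false,
    not_and]
  intro h; exact absurd h hp

lemma mix_condDist_eq_left (P Q : PMF (U × W))
    (hcond : ∀ u : U, (P.map Prod.fst) u ≠ 0 → (Q.map Prod.fst) u ≠ 0 →
      condDist P u = condDist Q u)
    (u : U) (hp : (P.map Prod.fst) u ≠ 0) :
    condDist (mix P Q) u = condDist P u := by
  funext w
  have hm0 : ((mix P Q).map Prod.fst) u ≠ 0 := mix_margin_ne_zero P Q u hp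
  have hmt : ((mix P Q).map Prod.fst) u ≠ ⊤ := PMF.apply_ne_top _ _
  have hpt : (P.map Prod.fst) u ≠ ⊤ := PMF.apply_ne_top _ _
  simp only [condDist]
  rw [ENNReal.div_eq_div_iff hp hpt hm0 hmt]
  rw [mul_comm ((P.map Prod.fst) u), mul_comm (((mix P Q).map Prod.fst) u)]
  exact mix_cross P Q hcond u hp w

lemma mix_comm' (P Q : PMF (U × W)) : mix P Q = mix Q P := by
  apply PMF.ext
  intro x
  rw [mix_apply', mix_apply', add_comm]


lemma klDiv_mix_eq (P Q : PMF (U × W))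
    (hcond : ∀ u : U, (P.map Prod.fst) u ≠ 0 → (Q.map Prod.fst) u ≠ 0 →
      condDist P u = condDist Q u) :
    klDiv P (mix P Q) = klDiv (P.map Prod.fst) ((mix P Q).map Prod.fst) := by
  classical
  unfold klDiv
  rw [Fintype.sum_prod_type]
  refine Finset.sum_congr rfl fun u _ => ?_
  by_cases hp : (P.map Prod.fst) u = 0
  · rw [if_pos hp]
    refine Finset.sum_eq_zero fun w _ => ?_
    have hsum : (∑ w', P (u, w')) = 0 := by rw [← map_fst_apply]; exact hp
    have h0 : P (u, w) = 0 := (Finset.sum_eq_zero_iff.mp hsum) w (Finset.mem_univ w)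
    rw [if_pos h0]
  · rw [if_neg hp]
    have hm0 : ((mix P Q).map Prod.fst) u ≠ 0 := mix_margin_ne_zero P Q u hp
    have hmt : ((mix P Q).map Prod.fst) u ≠ ⊤ := PMF.apply_ne_top _ _
    have hpt : (P.map Prod.fst) u ≠ ⊤ := PMF.apply_ne_top _ _
    have hC : ∀ w : W, P (u, w) ≠ 0 →
        (P (u, w)).toReal / ((mix P Q) (u, w)).toReal
          = ((P.map Prod.fst) u).toReal / (((mix P Q).map Prod.fst) u).toReal := by
      intro w hw
      have hM0 : (mix P Q) (u, w) ≠ 0 := by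
        rw [mix_apply']
        simp only [ne_eq, ENNReal.div_eq_zero_iff, add_eq_zero, ENNReal.ofNat_ne_top,
          or_false, not_and]
        intro h; exact absurd h hw
      have hMt : (mix P Q) (u, w) ≠ ⊤ := PMF.apply_ne_top _ _
      have hcross := mix_cross P Q hcond u hp w
      have hcrossR : ((mix P Q) (u, w)).toReal * ((P.map Prod.fst) u).toReal
          = (P (u, w)).toReal * (((mix P Q).map Prod.fst) u).toReal := by
        rw [← ENNReal.toReal_mul, ← ENNReal.toReal_mul, hcross]
      rw [div_eq_div_iff (ENNReal.toReal_ne_zero.mpr ⟨hM0, hMt⟩)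
        (ENNReal.toReal_ne_zero.mpr ⟨hm0, hmt⟩)]
      linear_combination -hcrossR
    calc (∑ w, if P (u, w) = 0 then 0 else (P (u, w)).toReal *
            Real.log ((P (u, w)).toReal / ((mix P Q) (u, w)).toReal))
        = ∑ w, (P (u, w)).toReal *
            Real.log (((P.map Prod.fst) u).toReal / (((mix P Q).map Prod.fst) u).toReal) := by
          refine Finset.sum_congr rfl fun w _ => ?_
          by_cases hw : P (u, w) = 0
          · rw [if_pos hw, hw]; simp
          · rw [if_neg hw, hC w hw]
      _ = ((P.map Prod.fst) u).toReal *
            Real.log (((P.map Prod.fst) u).toReal / (((mix P Q).map Prod.fst) u).toReal) := by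
          rw [← Finset.sum_mul, map_fst_apply, ENNReal.toReal_sum
            (fun w _ => PMF.apply_ne_top _ _)]

end helpers

/-- if `P` and `Q` on `U × W` have the same conditional distribution of `W`
given any `u` with positive marginal probability under both, then the mixture
`M = ½(P + Q)` has the same conditionals as well, and `D_KL(P ‖ M) = D_KL(P_U ‖ M_U)`. -/
theorem mix_cond_and_klDiv_eq_marginal_klDiv
    {U W : Type*} [Fintype U] [Nonempty U] [Fintype W] [Nonempty W]
    (P Q : PMF (U × W))
    (hcond : ∀ u : U, (P.map Prod.fst) u ≠ 0 → (Q.map Prod.fst) u ≠ 0 →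
      condDist P u = condDist Q u) :
    (∀ u : U, ((mix P Q).map Prod.fst) u ≠ 0 →
      ((P.map Prod.fst) u ≠ 0 → condDist (mix P Q) u = condDist P u) ∧
      ((Q.map Prod.fst) u ≠ 0 → condDist (mix P Q) u = condDist Q u)) ∧
    klDiv P (mix P Q) = klDiv (P.map Prod.fst) ((mix P Q).map Prod.fst) := by
  constructor
  · intro u _hm
    refine ⟨fun hp => mix_condDist_eq_left P Q hcond u hp, fun hq => ?_⟩
    rw [mix_comm']
    exact mix_condDist_eq_left Q P (fun u hq' hp' => (hcond u hp' hq').symm) u hq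
  · exact klDiv_mix_eq P Q hcond

end
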